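/- Let 0 < α < 1. There exists a constant C > 0 such that for every integer n ≥ 2, |(−1)^{n−1} C(α−2, n−1) − 1/(Γ(2−α) n^{α−1}) + α/(2 Γ(1−α) n^{α}) − (α+1)(3α−2)/(24 Γ(−α) n^{1+α})| ≤ C / n^{2+α}. -/

import Mathlib

open Finset

/-- Generalized binomial coefficient `C(a,k) = a(a-1)⋯(a-k+1)/k!`. -/
noncomputable def genBinom (a : ℝ) : ℕ → ℝ
  | 0 => 1
  | k + 1 => genBinom a k * (a - k) / (k + 1)

/-!
Write `a n = (-1)^(n-1) C(α-2, n-1)` and let `g` be the three-term expression subtracted from it,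
i.e. `g x = x^(1-α) (1/(1-α) - α/(2x) + α(α+1)(2-3α)/(24x²)) / Γ(1-α)`. The sequence satisfies
`a (n+1) = a n (1 + (1-α)/n)`, and `g` satisfies the same recursion up to `O(n^(-3-α))`: writing
`(n+1)^(1-α-j) = n^(1-α) (1 + 1/n)^(1-α-j)` and expanding by the binomial series with its Taylor
remainder, the three coefficients of `g` are exactly those that cancel the terms of order
`n^(1-α)`, ..., `n^(-2-α)`. As `a (n+1) ≍ n^(1-α)` (Euler's limit formula for `Γ(2-α)`), the
ratios `g n / a n` have increments `O(n^(-4))` and tend to `1`; summing the increments from `n` to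
`∞` gives `g n / a n - 1 = O(n^(-3))`, that is `a n - g n = O(n^(-2-α))`.
-/

open Filter Topology Nat

theorem genBinom_succ_mul (a : ℝ) (k : ℕ) :
    (k + 1) * genBinom a (k + 1) = a * genBinom (a - 1) k := by
  induction k with
  | zero => simp [genBinom]
  | succ k ih =>
    have h : genBinom a (k + 1) = a * genBinom (a - 1) k / (k + 1) := by
      rw [← ih]; field_simp
    rw [genBinom.eq_2 a (k + 1), genBinom.eq_2 (a - 1) k, h]
    push_cast
    field_simp
    ring

theorem hasDerivAt_sum_genBinom_mul_pow (a t : ℝ) (N : ℕ) :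
    HasDerivAt (fun s => ∑ k ∈ range (N + 1), genBinom a k * s ^ k)
      (a * ∑ k ∈ range N, genBinom (a - 1) k * t ^ k) t := by
  refine (HasDerivAt.fun_sum fun k _ =>
    (hasDerivAt_pow k t).const_mul (genBinom a k)).congr_deriv ?_
  rw [sum_range_succ', mul_sum]
  simp only [CharP.cast_eq_zero, zero_mul, mul_zero, add_zero, add_tsub_cancel_right]
  refine sum_congr rfl fun k _ => ?_
  rw [mul_left_comm, ← mul_assoc a, ← genBinom_succ_mul]
  push_cast
  ring

theorem abs_le_of_abs_deriv_le_mul_pow {f f' : ℝ → ℝ} {c t : ℝ} {k : ℕ} (ht : 0 ≤ t)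
    (h0 : f 0 = 0) (hf : ∀ s ∈ Set.Icc 0 t, HasDerivAt f (f' s) s)
    (hf' : ∀ s ∈ Set.Icc 0 t, |f' s| ≤ c * s ^ k) :
    |f t| ≤ c / (k + 1) * t ^ (k + 1) := by
  have hB : ∀ s, HasDerivAt (fun s => c / (k + 1) * s ^ (k + 1)) (c * s ^ k) s := fun s => by
    refine ((hasDerivAt_pow (k + 1) s).const_mul (c / (k + 1))).congr_deriv ?_
    push_cast
    field_simp
  refine image_norm_le_of_norm_deriv_right_le_deriv_boundary (a := 0) (b := t)
    (fun s hs => (hf s hs).continuousAt.continuousWithinAt)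
    (fun s hs => (hf s (Set.Ico_subset_Icc_self hs)).hasDerivWithinAt) (by simp [h0]) hB
    (fun s hs => hf' s (Set.Ico_subset_Icc_self hs)) ⟨ht, le_rfl⟩

noncomputable def binomRem (a : ℝ) (N : ℕ) (t : ℝ) : ℝ :=
  (1 + t) ^ a - ∑ k ∈ range N, genBinom a k * t ^ k

theorem abs_binomRem_le (N : ℕ) {a t : ℝ} (ha : a ≤ N) (ht : 0 ≤ t) :
    |binomRem a N t| ≤ |genBinom a N| * t ^ N := by
  induction N generalizing a t with
  | zero =>
    have := Real.rpow_le_one_of_one_le_of_nonpos (by linarith : 1 ≤ 1 + t) (by simpa using ha)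
    simp [binomRem, genBinom, abs_of_nonneg (Real.rpow_nonneg (by linarith : 0 ≤ 1 + t) a), this]
  | succ N ih =>
    have hderiv : ∀ s ∈ Set.Icc 0 t,
        HasDerivAt (binomRem a (N + 1)) (a * binomRem (a - 1) N s) s := by
      intro s hs
      have hbase : (1 + id s) ≠ 0 := by simp only [id]; linarith [hs.1]
      refine ((((hasDerivAt_id s).const_add 1).rpow_const (p := a) (Or.inl hbase)).sub
        (hasDerivAt_sum_genBinom_mul_pow a s N)).congr_deriv ?_
      simp only [one_mul, id_eq, binomRem]
      ring
    have := abs_le_of_abs_deriv_le_mul_pow (k := N) (c := |a| * |genBinom (a - 1) N|) ht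
      (by simp [binomRem, sum_range_succ', genBinom]) hderiv fun s hs => by
        rw [abs_mul, mul_assoc]
        exact mul_le_mul_of_nonneg_left (ih (by push_cast at ha; linarith) hs.1) (abs_nonneg a)
    rwa [← abs_mul, ← genBinom_succ_mul, abs_mul, abs_of_pos (by positivity : (0:ℝ) < N + 1),
      mul_div_cancel_left₀ _ (by positivity)] at this

theorem exists_pos_le_and_le_of_tendsto {u : ℕ → ℝ} {L : ℝ} (hu : ∀ n, 0 < u n) (hL : 0 < L)
    (h : Tendsto u atTop (𝓝 L)) : ∃ c > 0, ∃ C, ∀ n, c ≤ u n ∧ u n ≤ C := by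
  obtain ⟨C, hC⟩ := h.bddAbove_range
  obtain ⟨M, hM⟩ := (h.inv₀ hL.ne').bddAbove_range
  have hM0 : 0 < M := (inv_pos.2 (hu 0)).trans_le (hM ⟨0, rfl⟩)
  refine ⟨M⁻¹, inv_pos.2 hM0, C, fun n => ⟨?_, hC ⟨n, rfl⟩⟩⟩
  exact (inv_le_comm₀ (hu n) hM0).1 (hM ⟨n, rfl⟩)

theorem abs_sub_le_of_abs_sub_succ_le {s u : ℕ → ℝ} {a : ℝ} {n : ℕ}
    (hs : Tendsto s atTop (𝓝 a)) (hu : Tendsto u atTop (𝓝 0))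
    (hsu : ∀ k ≥ n, |s (k + 1) - s k| ≤ u k - u (k + 1)) : |s n - a| ≤ u n := by
  have hpartial : ∀ m ≥ n, |s m - s n| ≤ u n - u m := by
    intro m hm
    induction m, hm using le_induction with
    | base => simp
    | succ m hm ih =>
      calc |s (m + 1) - s n| ≤ |s (m + 1) - s m| + |s m - s n| := abs_sub_le _ _ _
        _ ≤ u n - u (m + 1) := by linarith [hsu m hm]
  have hlim := hu.const_sub (u n)
  rw [sub_zero] at hlim
  rw [abs_sub_comm]
  exact le_of_tendsto_of_tendsto ((hs.sub_const (s n)).abs) hlim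
    ((eventually_ge_atTop n).mono hpartial)

theorem inv_pow_four_le_inv_pow_three_sub {x : ℝ} (hx : 2 ≤ x) :
    x⁻¹ ^ 4 ≤ x⁻¹ ^ 3 - (x + 1)⁻¹ ^ 3 := by
  have hx0 : 0 < x := by linarith
  rw [← sub_nonneg]
  have : x⁻¹ ^ 3 - (x + 1)⁻¹ ^ 3 - x⁻¹ ^ 4 = (2 * x ^ 3 - 2 * x - 1) / (x ^ 4 * (x + 1) ^ 3) := by
    field_simp
    ring
  rw [this]
  have : 0 ≤ 2 * x ^ 3 - 2 * x - 1 := by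
    nlinarith [mul_le_mul_of_nonneg_left (show 4 ≤ x ^ 2 by nlinarith) hx0.le]
  positivity

noncomputable def profile (α x : ℝ) : ℝ :=
  x ^ (1 - α) * (1 / (1 - α) - α / 2 * x⁻¹ + α * (α + 1) * (2 - 3 * α) / 24 * x⁻¹ ^ 2) /
    Real.Gamma (1 - α)

theorem Gamma_two_sub {α : ℝ} (hα : α ≠ 1) :
    Real.Gamma (2 - α) = (1 - α) * Real.Gamma (1 - α) := by
  rw [show 2 - α = (1 - α) + 1 by ring, Real.Gamma_add_one (sub_ne_zero.2 hα.symm)]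

theorem profile_defect_eq {α x : ℝ} (hα : α ≠ 1) (hx : 0 < x) :
    profile α x * (1 + (1 - α) / x) - profile α (x + 1) =
      -(x ^ (1 - α) * (binomRem (1 - α) 4 x⁻¹ / (1 - α) - α / 2 * x⁻¹ * binomRem (-α) 3 x⁻¹ +
        α * (α + 1) * (2 - 3 * α) / 24 * x⁻¹ ^ 2 * binomRem (-1 - α) 2 x⁻¹)) /
        Real.Gamma (1 - α) := by
  have hα' : 1 - α ≠ 0 := sub_ne_zero.2 hα.symm
  have h1t : 0 < 1 + x⁻¹ := by positivity
  have hsplit : x + 1 = x * (1 + x⁻¹) := by field_simp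
  have hpow : ∀ k : ℕ, (1 + x⁻¹) ^ (1 - α - k) = (1 + x⁻¹) ^ (1 - α) / (1 + x⁻¹) ^ k := by
    intro k
    rw [Real.rpow_sub h1t, Real.rpow_natCast]
  have e1 := hpow 1
  have e2 := hpow 2
  rw [show (1 : ℝ) - α - (1 : ℕ) = -α by push_cast; ring] at e1
  rw [show (1 : ℝ) - α - (2 : ℕ) = -1 - α by push_cast; ring] at e2
  simp only [profile, binomRem, e1, e2, hsplit, Real.mul_rpow hx.le h1t.le, sum_range_succ,
    sum_range_zero, genBinom]
  field_simp
  ring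

theorem exists_abs_profile_defect_le {α : ℝ} (hα3 : -3 ≤ α) (hα : α ≠ 1) :
    ∃ K, ∀ x > 0,
      |profile α x * (1 + (1 - α) / x) - profile α (x + 1)| ≤ K * x ^ (1 - α) * x⁻¹ ^ 4 := by
  refine ⟨(|genBinom (1 - α) 4| / |1 - α| + |α / 2| * |genBinom (-α) 3| +
    |α * (α + 1) * (2 - 3 * α) / 24| * |genBinom (-1 - α) 2|) / |Real.Gamma (1 - α)|,
    fun x hx => ?_⟩
  have ht : 0 ≤ x⁻¹ := inv_nonneg.2 hx.le
  have h4 := abs_binomRem_le 4 (a := 1 - α) (by push_cast; linarith) ht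
  have h3 := abs_binomRem_le 3 (a := -α) (by push_cast; linarith) ht
  have h2 := abs_binomRem_le 2 (a := -1 - α) (by push_cast; linarith) ht
  rw [profile_defect_eq hα hx, abs_div, abs_neg, abs_mul, abs_of_pos (Real.rpow_pos_of_pos hx _)]
  calc _ ≤ x ^ (1 - α) * (|genBinom (1 - α) 4| * x⁻¹ ^ 4 / |1 - α| +
        |α / 2| * x⁻¹ * (|genBinom (-α) 3| * x⁻¹ ^ 3) +
        |α * (α + 1) * (2 - 3 * α) / 24| * x⁻¹ ^ 2 * (|genBinom (-1 - α) 2| * x⁻¹ ^ 2)) /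
        |Real.Gamma (1 - α)| := by
        refine div_le_div_of_nonneg_right ?_ (abs_nonneg _)
        gcongr
        refine (abs_add_le _ _).trans (add_le_add ((abs_sub _ _).trans (add_le_add ?_ ?_)) ?_) <;>
          simp only [abs_div, abs_mul, abs_pow, abs_of_nonneg ht] <;> gcongr
    _ = _ := by ring

theorem tendsto_profile_div_rpow {α : ℝ} (hα : α ≠ 1) :
    Tendsto (fun n : ℕ => profile α n / (n : ℝ) ^ (1 - α)) atTop (𝓝 (Real.Gamma (2 - α))⁻¹) := by
  have h0 := tendsto_inv_atTop_nhds_zero_nat (𝕜 := ℝ)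
  have hlim := ((tendsto_const_nhds (x := 1 / (1 - α))).sub (h0.const_mul (α / 2))).add
    ((h0.pow 2).const_mul (α * (α + 1) * (2 - 3 * α) / 24)) |>.div_const (Real.Gamma (1 - α))
  rw [mul_zero, sub_zero, zero_pow two_ne_zero, mul_zero, add_zero, div_div, ← Gamma_two_sub hα,
    one_div (Real.Gamma (2 - α))] at hlim
  refine hlim.congr' ((eventually_ne_atTop 0).mono fun n hn => ?_)
  have : (0 : ℝ) < (n : ℝ) ^ (1 - α) := Real.rpow_pos_of_pos (by positivity) _
  simp only [profile]
  field_simp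

theorem profile_eq {α x : ℝ} (hα0 : α ≠ 0) (hα1 : α < 1) (hx : 0 < x) :
    profile α x = 1 / (Real.Gamma (2 - α) * x ^ (α - 1)) - α / (2 * Real.Gamma (1 - α) * x ^ α) +
      (α + 1) * (3 * α - 2) / (24 * Real.Gamma (-α) * x ^ (1 + α)) := by
  have hG : 0 < Real.Gamma (1 - α) := Real.Gamma_pos_of_pos (by linarith)
  have hG' : Real.Gamma (-α) = -Real.Gamma (1 - α) / α := by
    rw [show 1 - α = -α + 1 by ring, Real.Gamma_add_one (neg_ne_zero.2 hα0)]
    field_simp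
  have hxα : 0 < x ^ α := Real.rpow_pos_of_pos hx α
  have : (1 : ℝ) - α ≠ 0 := by linarith
  simp only [profile, Gamma_two_sub hα1.ne, hG', Real.rpow_sub hx, Real.rpow_add hx, Real.rpow_one]
  field_simp
  ring

noncomputable def binomSeq (α : ℝ) (n : ℕ) : ℝ :=
  (-1) ^ (n - 1) * genBinom (α - 2) (n - 1)

theorem binomSeq_succ (α : ℝ) {n : ℕ} (hn : n ≠ 0) :
    binomSeq α (n + 1) = binomSeq α n * (1 + (1 - α) / n) := by
  obtain ⟨m, rfl⟩ := exists_eq_succ_of_ne_zero hn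
  simp only [binomSeq, succ_sub_one, genBinom, pow_succ]
  push_cast
  field_simp
  ring

theorem binomSeq_pos {α : ℝ} (hα : α < 2) {n : ℕ} (hn : n ≠ 0) : 0 < binomSeq α n := by
  obtain ⟨m, rfl⟩ := exists_eq_succ_of_ne_zero hn
  induction m with
  | zero => simp [binomSeq, genBinom]
  | succ m ih =>
    rw [binomSeq_succ α m.succ_ne_zero]
    have : 1 + (1 - α) / ((m + 1 : ℕ) : ℝ) = (m + 2 - α) / (m + 1) := by
      push_cast; field_simp; ring
    rw [this]
    exact mul_pos (ih m.succ_ne_zero) (div_pos (by linarith) (by positivity))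

theorem binomSeq_succ_mul_factorial (α : ℝ) (m : ℕ) :
    binomSeq α (m + 1) * m ! = ∏ j ∈ range m, (2 - α + j) := by
  induction m with
  | zero => simp [binomSeq, genBinom]
  | succ m ih =>
    rw [binomSeq_succ α m.succ_ne_zero, prod_range_succ, ← ih, factorial_succ]
    push_cast
    field_simp
    ring

theorem binomSeq_succ_mul_GammaSeq {α : ℝ} (hα : α < 2) (m : ℕ) :
    binomSeq α (m + 1) * (m + 2 - α) * Real.GammaSeq (2 - α) m = (m : ℝ) ^ (2 - α) := by
  have hA := (binomSeq_pos hα m.succ_ne_zero).ne'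
  have h2 : 2 - α + m ≠ 0 := by positivity
  have hfact : (m ! : ℝ) ≠ 0 := by positivity
  rw [Real.GammaSeq, prod_range_succ, ← binomSeq_succ_mul_factorial]
  field_simp
  ring

theorem tendsto_binomSeq_div_rpow {α : ℝ} (hα : α < 2) :
    Tendsto (fun n : ℕ => binomSeq α n / (n : ℝ) ^ (1 - α)) atTop (𝓝 (Real.Gamma (2 - α))⁻¹) := by
  rw [← tendsto_add_atTop_iff_nat 1]
  have hlim : Tendsto (fun m : ℕ => ((m : ℝ) / (m + 1)) ^ (1 - α) * ((m : ℝ) / (m + (2 - α))) /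
      Real.GammaSeq (2 - α) m) atTop (𝓝 (1 ^ (1 - α) * 1 / Real.Gamma (2 - α))) :=
    (((tendsto_natCast_div_add_atTop (1 : ℝ)).rpow_const (Or.inl one_ne_zero)).mul
      (tendsto_natCast_div_add_atTop (2 - α))).div (Real.GammaSeq_tendsto_Gamma _)
      (Real.Gamma_pos_of_pos (by linarith)).ne'
  rw [Real.one_rpow, one_mul, one_div] at hlim
  refine hlim.congr' ((eventually_ne_atTop 0).mono fun m hm => ?_)
  have hm' : (0 : ℝ) < m := by positivity
  have hA := (binomSeq_pos hα m.succ_ne_zero).ne'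
  have h2 : (0 : ℝ) < m + 2 - α := by linarith
  have h2' : (m : ℝ) + (2 - α) ≠ 0 := by linarith
  have hGS : Real.GammaSeq (2 - α) m = m * m ^ (1 - α) / (binomSeq α (m + 1) * (m + 2 - α)) := by
    rw [eq_div_iff (mul_ne_zero hA h2.ne'), mul_comm, binomSeq_succ_mul_GammaSeq hα,
      show (2 : ℝ) - α = 1 + (1 - α) by ring, Real.rpow_add hm', Real.rpow_one]
  have : (0:ℝ) < m ^ (1 - α) := Real.rpow_pos_of_pos hm' _
  rw [hGS, Real.div_rpow hm'.le (by positivity)]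
  push_cast
  field_simp
  ring

theorem exists_binomSeq_bounds {α : ℝ} (hα : α < 2) :
    ∃ c > 0, ∃ C, ∀ n : ℕ, n ≠ 0 →
      c * (n : ℝ) ^ (1 - α) ≤ binomSeq α n ∧ binomSeq α n ≤ C * (n : ℝ) ^ (1 - α) := by
  obtain ⟨c, hc, C, hcC⟩ := exists_pos_le_and_le_of_tendsto
    (fun m => div_pos (binomSeq_pos hα m.succ_ne_zero) (Real.rpow_pos_of_pos (by positivity) _))
    (inv_pos.2 (Real.Gamma_pos_of_pos (by linarith)))
    ((tendsto_add_atTop_iff_nat 1).2 (tendsto_binomSeq_div_rpow hα))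
  refine ⟨c, hc, C, fun n hn => ?_⟩
  obtain ⟨m, rfl⟩ := exists_eq_succ_of_ne_zero hn
  have hpow : (0 : ℝ) < ((m + 1 : ℕ) : ℝ) ^ (1 - α) := Real.rpow_pos_of_pos (by positivity) _
  rw [← le_div_iff₀ hpow, ← div_le_iff₀ hpow]
  exact hcC m

theorem exists_abs_ratio_succ_sub_le {α : ℝ} (hα3 : -3 ≤ α) (hα1 : α < 1) :
    ∃ D ≥ 0, ∀ k : ℕ, k ≠ 0 →
      |profile α (k + 1 : ℕ) / binomSeq α (k + 1) - profile α k / binomSeq α k| ≤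
        D * (k : ℝ)⁻¹ ^ 4 := by
  obtain ⟨K, hK⟩ := exists_abs_profile_defect_le hα3 hα1.ne
  have hK0 : 0 ≤ K := by simpa using (abs_nonneg _).trans (hK 1 one_pos)
  obtain ⟨c, hc, _C, hbounds⟩ := exists_binomSeq_bounds (by linarith : α < 2)
  refine ⟨K / c, by positivity, fun k hk => ?_⟩
  have hk0 : (0 : ℝ) < k := by positivity
  have hA1 := binomSeq_pos (by linarith : α < 2) k.succ_ne_zero
  have hlow : c * (k : ℝ) ^ (1 - α) ≤ binomSeq α (k + 1) := by
    refine le_trans ?_ (hbounds (k + 1) k.succ_ne_zero).1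
    gcongr
    linarith
  have hstep : profile α (k + 1 : ℕ) / binomSeq α (k + 1) - profile α k / binomSeq α k =
      -(profile α k * (1 + (1 - α) / k) - profile α (k + 1)) / binomSeq α (k + 1) := by
    have hA := (binomSeq_pos (by linarith : α < 2) hk).ne'
    have hρ : 1 + (1 - α) / (k : ℝ) ≠ 0 := by positivity
    rw [binomSeq_succ α hk]
    push_cast
    generalize 1 + (1 - α) / (k : ℝ) = ρ at hρ ⊢
    field_simp
    ring
  rw [hstep, abs_div, abs_neg, abs_of_pos hA1, div_le_iff₀ hA1]
  calc _ ≤ K * (k : ℝ) ^ (1 - α) * (k : ℝ)⁻¹ ^ 4 := hK k hk0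
    _ = K / c * (k : ℝ)⁻¹ ^ 4 * (c * (k : ℝ) ^ (1 - α)) := by field_simp
    _ ≤ _ := by gcongr

theorem exists_abs_binomSeq_sub_profile_le {α : ℝ} (hα3 : -3 ≤ α) (hα1 : α < 1) :
    ∃ C, ∀ n : ℕ, 2 ≤ n → |binomSeq α n - profile α n| ≤ C / (n : ℝ) ^ (2 + α) := by
  obtain ⟨D, hD0, hD⟩ := exists_abs_ratio_succ_sub_le hα3 hα1
  obtain ⟨_c, _hc, C, hbounds⟩ := exists_binomSeq_bounds (by linarith : α < 2)
  have hlim : Tendsto (fun n : ℕ => profile α n / binomSeq α n) atTop (𝓝 1) := by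
    have hG : (Real.Gamma (2 - α))⁻¹ ≠ 0 := (inv_pos.2 (Real.Gamma_pos_of_pos (by linarith))).ne'
    have h := (tendsto_profile_div_rpow hα1.ne).div (tendsto_binomSeq_div_rpow (by linarith)) hG
    rw [div_self hG] at h
    refine h.congr' ((eventually_ne_atTop 0).mono fun n hn => ?_)
    exact div_div_div_cancel_right₀ (Real.rpow_pos_of_pos (by positivity) _).ne' _ _
  refine ⟨D * C, fun n hn => ?_⟩
  have hn0 : n ≠ 0 := by omega
  have hA := binomSeq_pos (by linarith : α < 2) hn0
  have hratio := abs_sub_le_of_abs_sub_succ_le hlim (u := fun k : ℕ => D * (k : ℝ)⁻¹ ^ 3)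
    (by simpa using (tendsto_inv_atTop_nhds_zero_nat.pow 3).const_mul D) (n := n) fun k hk => by
      have hk2 : (2 : ℝ) ≤ k := by exact_mod_cast hn.trans hk
      calc _ ≤ D * (k : ℝ)⁻¹ ^ 4 := hD k (by omega)
        _ ≤ D * ((k : ℝ)⁻¹ ^ 3 - ((k : ℝ) + 1)⁻¹ ^ 3) := by
          gcongr; exact inv_pow_four_le_inv_pow_three_sub hk2
        _ = _ := by push_cast; ring
  have hupper := (hbounds n hn0).2
  have hsplit :
      binomSeq α n - profile α n = -(binomSeq α n * (profile α n / binomSeq α n - 1)) := by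
    field_simp
    ring
  have hpos : (0 : ℝ) < n := by positivity
  rw [hsplit, abs_neg, abs_mul, abs_of_pos hA]
  calc _ ≤ C * (n : ℝ) ^ (1 - α) * (D * (n : ℝ)⁻¹ ^ 3) :=
        mul_le_mul hupper hratio (abs_nonneg _) (hA.le.trans hupper)
    _ = D * C / (n : ℝ) ^ (2 + α) := by
        rw [show 2 + α = ((3 : ℕ) : ℝ) - (1 - α) by push_cast; ring,
          Real.rpow_sub hpos ((3 : ℕ) : ℝ), Real.rpow_natCast]
        have : (0 : ℝ) < n ^ (1 - α) := Real.rpow_pos_of_pos hpos _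
        field_simp

theorem stmt11 (α : ℝ) (hα0 : 0 < α) (hα1 : α < 1) :
    ∃ C > (0:ℝ), ∀ n : ℕ, 2 ≤ n →
      |(-1 : ℝ) ^ (n - 1) * genBinom (α - 2) (n - 1) -
          1 / (Real.Gamma (2 - α) * (n : ℝ) ^ (α - 1)) +
          α / (2 * Real.Gamma (1 - α) * (n : ℝ) ^ α) -
          (α + 1) * (3 * α - 2) / (24 * Real.Gamma (-α) * (n : ℝ) ^ (1 + α))| ≤
        C / (n : ℝ) ^ (2 + α) := by
  obtain ⟨C, hC⟩ := exists_abs_binomSeq_sub_profile_le (by linarith) hα1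
  refine ⟨max C 1, by positivity, fun n hn => ?_⟩
  have hn0 : (0 : ℝ) < n := by positivity
  calc _ = |binomSeq α n - profile α n| := by
        rw [profile_eq hα0.ne' hα1 hn0, binomSeq]
        congr 1
        ring
    _ ≤ C / (n : ℝ) ^ (2 + α) := hC n hn
    _ ≤ max C 1 / (n : ℝ) ^ (2 + α) := by gcongr; exact le_max_left _ _
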